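/- arXiv:2203.02396 — 2 statements merged into one kernel-verified Lean document; each statement's English description precedes it below -/
import Mathlib

section
/- Let f be L-smooth and μ-strongly convex with minimizer x_*, and suppose AggHB parameters satisfy the conditions of Lemma 2 (in particular BF ≤ (1 - max_i βᵢ)/(48L²) with B, F as defined). Then for weights w_k = (1-μF/2)^{-(k+1)}: 3LF ∑_{k=0}^K w_k ‖x_k - x̃_k‖² ≤ (F/4) ∑_{k=0}^K w_k (f(x_k) - f(x_*)), where x̃_k are the virtual iterates x̃_k = x_k - (1/m)∑ᵢ (βᵢγᵢ/(1-βᵢ))V_{k-1}^{(i)}. -/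
open scoped RealInnerProductSpace
open Finset

/-!
Unrolling the heavy-ball recursion, `x_{k+1} - x̃_{k+1} = (1/m) ∑ᵢ aᵢ ∑_{j ≤ k} βᵢ^{k-j} ∇f(x_j)`
with `aᵢ = βᵢγᵢ/(1-βᵢ)`: a nonnegative combination of past gradients of total mass at most `B`,
so by Jensen its squared norm is at most `B` times the same combination of the `‖∇f(x_j)‖²`.
Summing against `w_k = ρ^{-(k+1)}`, `ρ = 1 - μF/2`, and exchanging the order of summation, each
`‖∇f(x_j)‖²` collects the geometric tail `∑_k w_{k+1} βᵢ^{k-j} ≤ w_j/(ρ - βᵢ)`, and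
`ρ - βᵢ ≥ 3(1-β_max)/4` because the step-size condition gives `μF ≤ (1-β_max)/2`.
The descent lemma gives `‖∇f(x)‖² ≤ 2L(f(x) - f(x_*))`, and `BF ≤ (1-β_max)/(48L²)` turns the
resulting constant `8L²BF/(1-β_max)` into `1/6 ≤ 1/4`.
-/

section Smooth

variable {E : Type*} [NormedAddCommGroup E] [InnerProductSpace ℝ E] [CompleteSpace E]
  {f : E → ℝ} {L : ℝ}

theorem hasDerivAt_apply_add_smul (hf : Differentiable ℝ f) (x v : E) (t : ℝ) :
    HasDerivAt (fun s : ℝ => f (x + s • v)) ⟪gradient f (x + t • v), v⟫ t := by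
  have hline : HasDerivAt (fun s : ℝ => x + s • v) v t := by
    simpa using ((hasDerivAt_id t).smul_const v).const_add x
  simpa [Function.comp_def] using
    (hf (x + t • v)).hasGradientAt.hasFDerivAt.comp_hasDerivAt t hline

theorem apply_add_le_of_lipschitz_gradient (hf : Differentiable ℝ f)
    (hsmooth : ∀ x y, ‖gradient f x - gradient f y‖ ≤ L * ‖x - y‖) (x v : E) :
    f (x + v) ≤ f x + ⟪gradient f x, v⟫ + L / 2 * ‖v‖ ^ 2 := by
  let ψ : ℝ → ℝ := fun t => f (x + t • v) - t * ⟪gradient f x, v⟫ - L / 2 * t ^ 2 * ‖v‖ ^ 2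
  have hψ : ∀ t, HasDerivAt ψ
      (⟪gradient f (x + t • v) - gradient f x, v⟫ - L * t * ‖v‖ ^ 2) t := by
    intro t
    refine (((hasDerivAt_apply_add_smul hf x v t).sub ((hasDerivAt_id t).mul_const
      ⟪gradient f x, v⟫)).sub (((hasDerivAt_pow 2 t).const_mul (L / 2)).mul_const
        (‖v‖ ^ 2))).congr_deriv ?_
    rw [inner_sub_left, Nat.cast_ofNat, pow_one, one_mul]; ring
  have hψ' : ∀ t ∈ interior (Set.Ici (0 : ℝ)),
      ⟪gradient f (x + t • v) - gradient f x, v⟫ - L * t * ‖v‖ ^ 2 ≤ 0 := by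
    intro t ht
    rw [interior_Ici] at ht
    have := hsmooth (x + t • v) x
    rw [add_sub_cancel_left, norm_smul, Real.norm_of_nonneg (le_of_lt ht)] at this
    nlinarith [real_inner_le_norm (gradient f (x + t • v) - gradient f x) v, norm_nonneg v]
  have hanti := antitoneOn_of_hasDerivWithinAt_nonpos (convex_Ici 0)
    (fun t _ => (hψ t).continuousAt.continuousWithinAt)
    (fun t _ => (hψ t).hasDerivWithinAt) hψ'
  have := hanti (Set.mem_Ici.2 le_rfl) (Set.mem_Ici.2 zero_le_one) zero_le_one
  simp only [ψ, zero_smul, add_zero, one_smul, zero_mul, sub_zero, one_mul, one_pow,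
    ne_eq, OfNat.ofNat_ne_zero, not_false_eq_true, zero_pow, mul_zero] at this
  linarith

theorem sq_norm_gradient_le_of_forall_le (hf : Differentiable ℝ f) (hL : 0 < L)
    (hsmooth : ∀ x y, ‖gradient f x - gradient f y‖ ≤ L * ‖x - y‖)
    {xstar : E} (hmin : ∀ y, f xstar ≤ f y) (x : E) :
    ‖gradient f x‖ ^ 2 ≤ 2 * L * (f x - f xstar) := by
  have hstep := apply_add_le_of_lipschitz_gradient hf hsmooth x (-L⁻¹ • gradient f x)
  rw [inner_smul_right, real_inner_self_eq_norm_sq, norm_smul, norm_neg,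
    Real.norm_of_nonneg (inv_nonneg.2 hL.le)] at hstep
  have hlow := hmin (x + -L⁻¹ • gradient f x)
  have hval : -L⁻¹ * ‖gradient f x‖ ^ 2 + L / 2 * (L⁻¹ * ‖gradient f x‖) ^ 2 =
      -(2 * L)⁻¹ * ‖gradient f x‖ ^ 2 := by
    field_simp; ring
  have : (2 * L)⁻¹ * ‖gradient f x‖ ^ 2 ≤ f x - f xstar := by linarith
  rwa [inv_mul_le_iff₀ (by positivity)] at this

theorem sum_mul_sq_norm_gradient_le {ι : Type*} (hf : Differentiable ℝ f) (hL : 0 < L)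
    (hsmooth : ∀ x y, ‖gradient f x - gradient f y‖ ≤ L * ‖x - y‖)
    {xstar : E} (hmin : ∀ y, f xstar ≤ f y) (s : Finset ι) {w : ι → ℝ} (hw : ∀ j ∈ s, 0 ≤ w j)
    (x : ι → E) :
    ∑ j ∈ s, w j * ‖gradient f (x j)‖ ^ 2 ≤ 2 * L * ∑ j ∈ s, w j * (f (x j) - f xstar) := by
  rw [mul_sum]
  refine sum_le_sum fun j hj => ?_
  rw [mul_left_comm]
  exact mul_le_mul_of_nonneg_left (sq_norm_gradient_le_of_forall_le hf hL hsmooth hmin (x j))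
    (hw j hj)

end Smooth

theorem norm_sum_smul_sq_le {ι E : Type*} [SeminormedAddCommGroup E] [NormedSpace ℝ E]
    (s : Finset ι) {c : ι → ℝ} (hc : ∀ i ∈ s, 0 ≤ c i) (v : ι → E) :
    ‖∑ i ∈ s, c i • v i‖ ^ 2 ≤ (∑ i ∈ s, c i) * ∑ i ∈ s, c i * ‖v i‖ ^ 2 := by
  have htri : ‖∑ i ∈ s, c i • v i‖ ≤ ∑ i ∈ s, c i * ‖v i‖ :=
    (norm_sum_le _ _).trans_eq <| sum_congr rfl fun i hi => by
      rw [norm_smul, Real.norm_of_nonneg (hc i hi)]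
  calc ‖∑ i ∈ s, c i • v i‖ ^ 2 ≤ (∑ i ∈ s, c i * ‖v i‖) ^ 2 :=
        pow_le_pow_left₀ (norm_nonneg _) htri 2
    _ ≤ (∑ i ∈ s, c i) * ∑ i ∈ s, c i * ‖v i‖ ^ 2 :=
        sum_sq_le_sum_mul_sum_of_sq_le_mul s hc
          (fun i hi => mul_nonneg (hc i hi) (sq_nonneg _)) fun i _ => (by ring : _ = _).le

-- The heavy-ball buffer `V_k = β V_{k-1} + g_k`, `V_0 = g_0`, in closed form.
def momentum {E : Type*} [AddCommMonoid E] [Module ℝ E] (β : ℝ) (g : ℕ → E) (k : ℕ) : E :=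
  ∑ j ∈ range (k + 1), β ^ (k - j) • g j

section Momentum

variable {E : Type*} [AddCommMonoid E] [Module ℝ E] {β : ℝ} {g : ℕ → E}

theorem momentum_zero : momentum β g 0 = g 0 := by
  simp [momentum]

theorem momentum_succ (k : ℕ) : momentum β g (k + 1) = β • momentum β g k + g (k + 1) := by
  rw [momentum, sum_range_succ, momentum, smul_sum, Nat.sub_self, pow_zero, one_smul]
  congr 1
  refine sum_congr rfl fun j hj => ?_
  rw [smul_smul, ← pow_succ', Nat.sub_add_comm (mem_range_succ_iff.1 hj)]

theorem eq_momentum_of_succ {V : ℕ → E} (h0 : V 0 = g 0)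
    (hsucc : ∀ k, V (k + 1) = β • V k + g (k + 1)) (k : ℕ) : V k = momentum β g k := by
  induction k with
  | zero => rw [h0, momentum_zero]
  | succ k ih => rw [hsucc, ih, momentum_succ]

end Momentum

theorem sum_range_pow_sub_le {β : ℝ} (hβ0 : 0 ≤ β) (hβ1 : β < 1) {k K : ℕ} (hk : k ≤ K) :
    ∑ j ∈ range (k + 1), β ^ (k - j) ≤ (1 - β ^ (K + 1)) / (1 - β) := by
  have hgeom : ∑ t ∈ range (K + 1), β ^ t = (1 - β ^ (K + 1)) / (1 - β) := by
    rw [geom_sum_eq hβ1.ne, ← neg_div_neg_eq, neg_sub, neg_sub]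
  have hreflect : ∑ j ∈ range (k + 1), β ^ (k - j) = ∑ t ∈ range (k + 1), β ^ t := by
    simpa using sum_range_reflect (fun t => β ^ t) (k + 1)
  rw [hreflect, ← hgeom]
  exact sum_le_sum_of_subset_of_nonneg (range_subset_range.2 (by omega))
    fun j _ _ => pow_nonneg hβ0 j

theorem sum_Ico_inv_pow_mul_pow_le {ρ β : ℝ} (hβ0 : 0 ≤ β) (hβρ : β < ρ) (j K : ℕ) :
    ∑ k ∈ Ico j K, ρ⁻¹ ^ (k + 2) * β ^ (k - j) ≤ ρ⁻¹ ^ (j + 1) / (ρ - β) := by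
  have hρ : 0 < ρ := hβ0.trans_lt hβρ
  have hr1 : β / ρ < 1 := (div_lt_one hρ).2 hβρ
  calc ∑ k ∈ Ico j K, ρ⁻¹ ^ (k + 2) * β ^ (k - j)
      = ρ⁻¹ ^ (j + 2) * ∑ t ∈ range (K - j), (β / ρ) ^ t := by
        rw [sum_Ico_eq_sum_range, mul_sum]
        refine sum_congr rfl fun t _ => ?_
        rw [add_tsub_cancel_left, div_eq_mul_inv, mul_pow]
        ring
    _ ≤ ρ⁻¹ ^ (j + 2) * (1 - β / ρ)⁻¹ := by
        gcongr
        have := geom_sum_Ico_le_of_lt_one (m := 0) (n := K - j) (div_nonneg hβ0 hρ.le) hr1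
        rwa [← range_eq_Ico, pow_zero, one_div] at this
    _ = ρ⁻¹ ^ (j + 1) / (ρ - β) := by
        rw [one_sub_div hρ.ne', inv_div, pow_succ]
        field_simp

theorem sum_inv_pow_mul_momentum_le {ρ β : ℝ} (hβ0 : 0 ≤ β) (hβρ : β < ρ) {u : ℕ → ℝ}
    (hu : ∀ j, 0 ≤ u j) (K : ℕ) :
    ∑ k ∈ range K, ρ⁻¹ ^ (k + 2) * momentum β u k ≤
      (ρ - β)⁻¹ * ∑ j ∈ range K, ρ⁻¹ ^ (j + 1) * u j := by
  have hswap : ∑ k ∈ range K, ρ⁻¹ ^ (k + 2) * momentum β u k =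
      ∑ j ∈ range K, (∑ k ∈ Ico j K, ρ⁻¹ ^ (k + 2) * β ^ (k - j)) * u j := by
    simp only [momentum, smul_eq_mul, mul_sum, sum_mul, range_eq_Ico]
    rw [sum_Ico_Ico_comm]
    exact sum_congr rfl fun k _ => sum_congr rfl fun j _ => by ring
  rw [hswap, mul_sum]
  refine sum_le_sum fun j _ => ?_
  calc (∑ k ∈ Ico j K, ρ⁻¹ ^ (k + 2) * β ^ (k - j)) * u j
      ≤ ρ⁻¹ ^ (j + 1) / (ρ - β) * u j :=
        mul_le_mul_of_nonneg_right (sum_Ico_inv_pow_mul_pow_le hβ0 hβρ j K) (hu j)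
    _ = (ρ - β)⁻¹ * (ρ⁻¹ ^ (j + 1) * u j) := by ring

theorem momentum_nonneg {β : ℝ} (hβ : 0 ≤ β) {u : ℕ → ℝ} (hu : ∀ j, 0 ≤ u j) (k : ℕ) :
    0 ≤ momentum β u k :=
  sum_nonneg fun j _ => mul_nonneg (pow_nonneg hβ _) (hu j)

section Aggregate

variable {ι E : Type*} [SeminormedAddCommGroup E] [NormedSpace ℝ E] (s : Finset ι)
  {a β : ι → ℝ} (g : ℕ → E)

theorem norm_sum_smul_momentum_sq_le (ha : ∀ i ∈ s, 0 ≤ a i) (hβ : ∀ i ∈ s, 0 ≤ β i) (k : ℕ) :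
    ‖∑ i ∈ s, a i • momentum (β i) g k‖ ^ 2 ≤
      (∑ i ∈ s, a i * ∑ j ∈ range (k + 1), β i ^ (k - j)) *
        ∑ i ∈ s, a i * momentum (β i) (fun j => ‖g j‖ ^ 2) k := by
  have hc : ∀ p ∈ s ×ˢ range (k + 1), 0 ≤ a p.1 * β p.1 ^ (k - p.2) := fun p hp =>
    mul_nonneg (ha p.1 (mem_product.1 hp).1) (pow_nonneg (hβ p.1 (mem_product.1 hp).1) _)
  have := norm_sum_smul_sq_le _ hc fun p => g p.2
  simpa only [sum_product, momentum, smul_sum, smul_smul, mul_sum, smul_eq_mul, mul_assoc]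
    using this

theorem sum_inv_pow_mul_norm_sum_smul_momentum_sq_le {ρ B : ℝ} (K : ℕ) (hρ : 0 < ρ)
    (ha : ∀ i ∈ s, 0 ≤ a i) (hβ0 : ∀ i ∈ s, 0 ≤ β i) (hβρ : ∀ i ∈ s, β i < ρ)
    (hB : ∀ k < K, ∑ i ∈ s, a i * ∑ j ∈ range (k + 1), β i ^ (k - j) ≤ B) :
    ∑ k ∈ range K, ρ⁻¹ ^ (k + 2) * ‖∑ i ∈ s, a i • momentum (β i) g k‖ ^ 2 ≤
      B * (∑ i ∈ s, a i / (ρ - β i)) * ∑ j ∈ range K, ρ⁻¹ ^ (j + 1) * ‖g j‖ ^ 2 := by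
  obtain rfl | hK := K.eq_zero_or_pos
  · simp
  have hB0 : 0 ≤ B := (sum_nonneg fun i hi => mul_nonneg (ha i hi)
    (sum_nonneg fun j _ => pow_nonneg (hβ0 i hi) _)).trans (hB 0 hK)
  have hsq : ∀ j, 0 ≤ ‖g j‖ ^ 2 := fun j => sq_nonneg _
  calc ∑ k ∈ range K, ρ⁻¹ ^ (k + 2) * ‖∑ i ∈ s, a i • momentum (β i) g k‖ ^ 2
      ≤ ∑ k ∈ range K, ρ⁻¹ ^ (k + 2) *
          (B * ∑ i ∈ s, a i * momentum (β i) (fun j => ‖g j‖ ^ 2) k) := by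
        gcongr with k hk
        exact (norm_sum_smul_momentum_sq_le s g ha hβ0 k).trans <|
          mul_le_mul_of_nonneg_right (hB k (mem_range.1 hk)) <|
            sum_nonneg fun i hi => mul_nonneg (ha i hi) (momentum_nonneg (hβ0 i hi) hsq k)
    _ = B * ∑ i ∈ s, a i *
          ∑ k ∈ range K, ρ⁻¹ ^ (k + 2) * momentum (β i) (fun j => ‖g j‖ ^ 2) k := by
        simp only [mul_sum]
        rw [sum_comm]
        exact sum_congr rfl fun i _ => sum_congr rfl fun k _ => by ring
    _ ≤ B * ∑ i ∈ s, a i *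
          ((ρ - β i)⁻¹ * ∑ j ∈ range K, ρ⁻¹ ^ (j + 1) * ‖g j‖ ^ 2) := by
        gcongr with i hi
        · exact ha i hi
        · exact sum_inv_pow_mul_momentum_le (hβ0 i hi) (hβρ i hi) hsq K
    _ = B * (∑ i ∈ s, a i / (ρ - β i)) * ∑ j ∈ range K, ρ⁻¹ ^ (j + 1) * ‖g j‖ ^ 2 := by
        rw [mul_assoc, sum_mul]
        exact congrArg (B * ·) (sum_congr rfl fun i _ => by ring)

end Aggregate

namespace AggHB

variable {m : ℕ} {β γ : Fin (m + 1) → ℝ}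

theorem mul_avg_le {μ c : ℝ} (hβ1 : ∀ i, β i < 1) (hγμ : ∀ i, 2 * μ * γ i ≤ c * (1 - β i)) :
    μ * (1 / (m + 1 : ℝ) * ∑ i, γ i / (1 - β i)) ≤ c / 2 := by
  have hterm : ∀ i, μ * (γ i / (1 - β i)) ≤ c / 2 := fun i => by
    rw [← mul_div_assoc, div_le_iff₀ (sub_pos.2 (hβ1 i))]
    linarith [hγμ i]
  calc μ * (1 / (m + 1 : ℝ) * ∑ i, γ i / (1 - β i))
      = 1 / (m + 1 : ℝ) * ∑ i, μ * (γ i / (1 - β i)) := by rw [← mul_sum]; ring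
    _ ≤ 1 / (m + 1 : ℝ) * ∑ _i : Fin (m + 1), c / 2 := by gcongr with i; exact hterm i
    _ = c / 2 := by simp; field_simp

theorem momentum_mass_le (hβ0 : ∀ i, 0 ≤ β i) (hβ1 : ∀ i, β i < 1) (hγ : ∀ i, 0 ≤ γ i)
    {k K : ℕ} (hk : k ≤ K) :
    ∑ i, 1 / (m + 1 : ℝ) * (β i * γ i / (1 - β i)) * ∑ j ∈ range (k + 1), β i ^ (k - j) ≤
      1 / (m + 1 : ℝ) * ∑ i, β i * γ i * (1 - β i ^ (K + 1)) / (1 - β i) ^ 2 := by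
  rw [mul_sum]
  refine sum_le_sum fun i _ => ?_
  have h1β := sub_pos.2 (hβ1 i)
  calc 1 / (m + 1 : ℝ) * (β i * γ i / (1 - β i)) * ∑ j ∈ range (k + 1), β i ^ (k - j)
      ≤ 1 / (m + 1 : ℝ) * (β i * γ i / (1 - β i)) * ((1 - β i ^ (K + 1)) / (1 - β i)) := by
        gcongr
        · exact mul_nonneg (by positivity) (div_nonneg (mul_nonneg (hβ0 i) (hγ i)) h1β.le)
        · exact sum_range_pow_sub_le (hβ0 i) (hβ1 i) hk
    _ = 1 / (m + 1 : ℝ) * (β i * γ i * (1 - β i ^ (K + 1)) / (1 - β i) ^ 2) := by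
        field_simp

theorem sum_div_sub_le {ρ b : ℝ} (hβ1 : ∀ i, β i < 1) (hγ : ∀ i, 0 ≤ γ i)
    (hb : b < 1) (hρβ : ∀ i, 3 / 4 * (1 - b) ≤ ρ - β i) :
    ∑ i, 1 / (m + 1 : ℝ) * (β i * γ i / (1 - β i)) / (ρ - β i) ≤
      4 / 3 * (1 / (m + 1 : ℝ) * ∑ i, γ i / (1 - β i)) / (1 - b) := by
  have hterm : ∀ i, β i / (ρ - β i) ≤ 4 / 3 / (1 - b) := fun i => by
    rw [div_le_div_iff₀ (by linarith [hρβ i]) (sub_pos.2 hb)]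
    nlinarith [hρβ i, hβ1 i]
  calc ∑ i, 1 / (m + 1 : ℝ) * (β i * γ i / (1 - β i)) / (ρ - β i)
      = ∑ i, 1 / (m + 1 : ℝ) * (γ i / (1 - β i)) * (β i / (ρ - β i)) :=
        sum_congr rfl fun i _ => by ring
    _ ≤ ∑ i, 1 / (m + 1 : ℝ) * (γ i / (1 - β i)) * (4 / 3 / (1 - b)) :=
        sum_le_sum fun i _ => mul_le_mul_of_nonneg_left (hterm i) <|
          mul_nonneg (by positivity) (div_nonneg (hγ i) (sub_pos.2 (hβ1 i)).le)
    _ = 4 / 3 * (1 / (m + 1 : ℝ) * ∑ i, γ i / (1 - β i)) / (1 - b) := by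
        rw [← sum_mul, ← mul_sum]; ring

theorem sub_virtual_eq {E : Type*} [AddCommGroup E] [Module ℝ E] {g : ℕ → E}
    {V : Fin (m + 1) → ℕ → E} (hV0 : ∀ i, V i 0 = g 0)
    (hV : ∀ i k, V i (k + 1) = β i • V i k + g (k + 1)) {y yt : E} {k : ℕ}
    (hyt : yt = y - (1 / (m + 1 : ℝ)) • ∑ i, (β i * γ i / (1 - β i)) • V i k) :
    y - yt = ∑ i, (1 / (m + 1 : ℝ) * (β i * γ i / (1 - β i))) • momentum (β i) g k := by
  rw [hyt, sub_sub_cancel, smul_sum]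
  exact sum_congr rfl fun i _ => by rw [smul_smul, eq_momentum_of_succ (hV0 i) (hV i)]

variable {βmax μ F B : ℝ} {K : ℕ} {w : ℕ → ℝ}

theorem three_quarters_mul_le_sub (hβ : ∀ i, β i ∈ Set.Ico (0 : ℝ) 1)
    (hβmax : βmax = univ.sup' univ_nonempty β) (hγμ : ∀ i, 2 * μ * γ i ≤ (1 - βmax) * (1 - β i))
    (hF : F = 1 / (m + 1 : ℝ) * ∑ i, γ i / (1 - β i)) (i : Fin (m + 1)) :
    3 / 4 * (1 - βmax) ≤ 1 - μ * F / 2 - β i := by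
  have := hF ▸ mul_avg_le (fun i => (hβ i).2) hγμ
  linarith [hβmax ▸ le_sup' β (mem_univ i)]

theorem one_sub_mul_div_two_pos (hβ : ∀ i, β i ∈ Set.Ico (0 : ℝ) 1)
    (hβmax : βmax = univ.sup' univ_nonempty β) (hγμ : ∀ i, 2 * μ * γ i ≤ (1 - βmax) * (1 - β i))
    (hF : F = 1 / (m + 1 : ℝ) * ∑ i, γ i / (1 - β i)) : 0 < 1 - μ * F / 2 := by
  have hβmax1 : βmax < 1 := hβmax ▸ (sup'_lt_iff _).2 fun i _ => (hβ i).2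
  linarith [three_quarters_mul_le_sub hβ hβmax hγμ hF 0, (hβ 0).1]

theorem sum_weight_mul_sq_norm_sub_virtual_le {E : Type*} [SeminormedAddCommGroup E]
    [NormedSpace ℝ E] {g : ℕ → E} {V : Fin (m + 1) → ℕ → E} {y yt : ℕ → E}
    (hβ : ∀ i, β i ∈ Set.Ico (0 : ℝ) 1) (hγ : ∀ i, 0 ≤ γ i)
    (hβmax : βmax = univ.sup' univ_nonempty β) (hγμ : ∀ i, 2 * μ * γ i ≤ (1 - βmax) * (1 - β i))
    (hF : F = 1 / (m + 1 : ℝ) * ∑ i, γ i / (1 - β i))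
    (hB : B = 1 / (m + 1 : ℝ) * ∑ i, β i * γ i * (1 - β i ^ (K + 1)) / (1 - β i) ^ 2)
    (hw : ∀ k, w k = (1 - μ * F / 2)⁻¹ ^ (k + 1))
    (hV0 : ∀ i, V i 0 = g 0) (hV : ∀ i k, V i (k + 1) = β i • V i k + g (k + 1))
    (hyt0 : yt 0 = y 0)
    (hyt : ∀ k, yt (k + 1) = y (k + 1) - (1 / (m + 1 : ℝ)) • ∑ i, (β i * γ i / (1 - β i)) • V i k) :
    ∑ k ∈ range (K + 1), w k * ‖y k - yt k‖ ^ 2 ≤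
      4 / 3 * (B * F / (1 - βmax)) * ∑ j ∈ range K, w j * ‖g j‖ ^ 2 := by
  rw [sum_range_succ', hyt0, sub_self, norm_zero, sq, mul_zero, mul_zero, add_zero]
  simp only [sub_virtual_eq hV0 hV (hyt _)]
  have hβ0 : ∀ i, 0 ≤ β i := fun i => (hβ i).1
  have hβ1 : ∀ i, β i < 1 := fun i => (hβ i).2
  have hβmax1 : βmax < 1 := hβmax ▸ (sup'_lt_iff _).2 fun i _ => hβ1 i
  have hρβ := three_quarters_mul_le_sub hβ hβmax hγμ hF
  have hρ := one_sub_mul_div_two_pos hβ hβmax hγμ hF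
  have ha : ∀ i, 0 ≤ 1 / (m + 1 : ℝ) * (β i * γ i / (1 - β i)) := fun i =>
    mul_nonneg (by positivity) (div_nonneg (mul_nonneg (hβ0 i) (hγ i)) (sub_pos.2 (hβ1 i)).le)
  have hmass := fun {k : ℕ} (hk : k ≤ K) => hB ▸ momentum_mass_le hβ0 hβ1 hγ hk
  have hB0 : 0 ≤ B := (sum_nonneg fun i _ => mul_nonneg (ha i)
    (sum_nonneg fun j _ => pow_nonneg (hβ0 i) _)).trans (hmass K.zero_le)
  have key := sum_inv_pow_mul_norm_sum_smul_momentum_sq_le univ g K hρ (fun i _ => ha i)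
    (fun i _ => hβ0 i) (fun i _ => by linarith [hρβ i, hβmax1]) fun k hk => hmass hk.le
  simp only [← hw] at key
  refine key.trans ?_
  rw [show 4 / 3 * (B * F / (1 - βmax)) = B * (4 / 3 * F / (1 - βmax)) by ring]
  gcongr
  · exact sum_nonneg fun j _ => mul_nonneg (hw j ▸ pow_nonneg (inv_nonneg.2 hρ.le) _)
      (sq_nonneg _)
  · exact (sum_div_sub_le hβ1 hγ hβmax1 hρβ).trans_eq (by rw [hF])

end AggHB

theorem AggHB_weighted_sum_of_momentums_general {n : ℕ}
    (f : EuclideanSpace ℝ (Fin n) → ℝ) (hf : Differentiable ℝ f)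
    (L μ : ℝ) (hL : 0 < L)
    (hsmooth : ∀ x y, ‖gradient f x - gradient f y‖ ≤ L * ‖x - y‖)
    (xstar : EuclideanSpace ℝ (Fin n)) (hmin : ∀ y, f xstar ≤ f y)
    (m : ℕ) (β γ : Fin (m + 1) → ℝ)
    (hβ : ∀ i, β i ∈ Set.Ico (0 : ℝ) 1) (hγ : ∀ i, 0 < γ i)
    (βmax : ℝ) (hβmax : βmax = Finset.univ.sup' Finset.univ_nonempty β)
    (hγμ : ∀ i, 2 * μ * γ i ≤ (1 - βmax) * (1 - β i))
    (F : ℝ) (hF : F = (1 / (m + 1 : ℝ)) * ∑ i, γ i / (1 - β i))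
    (K : ℕ)
    (B : ℝ) (hB : B = (1 / (m + 1 : ℝ)) *
      ∑ i, β i * γ i * (1 - (β i) ^ (K + 1)) / (1 - β i) ^ 2)
    (hBF : B * F ≤ (1 - βmax) / (48 * L ^ 2))
    (x : ℕ → EuclideanSpace ℝ (Fin n)) (V : Fin (m + 1) → ℕ → EuclideanSpace ℝ (Fin n))
    (hV0 : ∀ i, V i 0 = gradient f (x 0))
    (hV : ∀ i k, V i (k + 1) = β i • V i k + gradient f (x (k + 1)))
    (xt : ℕ → EuclideanSpace ℝ (Fin n))
    (hxt0 : xt 0 = x 0)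
    (hxt : ∀ k, xt (k + 1) = x (k + 1) - (1 / (m + 1 : ℝ)) •
      ∑ i, (β i * γ i / (1 - β i)) • V i k)
    (w : ℕ → ℝ) (hw : ∀ k, w k = ((1 - μ * F / 2)⁻¹) ^ (k + 1)) :
    3 * L * F * ∑ k ∈ Finset.range (K + 1), w k * ‖x k - xt k‖ ^ 2 ≤
      F / 4 * ∑ k ∈ Finset.range (K + 1), w k * (f (x k) - f xstar) := by
  have hβmax1 : βmax < 1 := hβmax ▸ (sup'_lt_iff _).2 fun i _ => (hβ i).2
  have hw0 : ∀ k, 0 ≤ w k := fun k => hw k ▸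
    pow_nonneg (inv_nonneg.2 (AggHB.one_sub_mul_div_two_pos hβ hβmax hγμ hF).le) _
  have hF0 : 0 ≤ F := hF ▸ mul_nonneg (by positivity)
    (sum_nonneg fun i _ => div_nonneg (hγ i).le (sub_pos.2 (hβ i).2).le)
  set SD := ∑ k ∈ range (K + 1), w k * (f (x k) - f xstar)
  have hSD0 : 0 ≤ SD := sum_nonneg fun k _ => mul_nonneg (hw0 k) (sub_nonneg.2 (hmin (x k)))
  have hgrad : ∑ j ∈ range K, w j * ‖gradient f (x j)‖ ^ 2 ≤ 2 * L * SD :=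
    (sum_le_sum_of_subset_of_nonneg (range_subset_range.2 K.le_succ)
      fun j _ _ => mul_nonneg (hw0 j) (sq_nonneg _)).trans
    (sum_mul_sq_norm_gradient_le hf hL hsmooth hmin _ (fun j _ => hw0 j) x)
  have hcoef : 4 / 3 * (B * F / (1 - βmax)) ≤ 1 / (36 * L ^ 2) := by
    calc 4 / 3 * (B * F / (1 - βmax)) ≤ 4 / 3 * ((1 - βmax) / (48 * L ^ 2) / (1 - βmax)) := by
          gcongr
      _ = 1 / (36 * L ^ 2) := by field_simp [(sub_pos.2 hβmax1).ne']; ring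
  calc 3 * L * F * ∑ k ∈ range (K + 1), w k * ‖x k - xt k‖ ^ 2
      ≤ 3 * L * F * (1 / (36 * L ^ 2) * (2 * L * SD)) := by
        gcongr
        exact (AggHB.sum_weight_mul_sq_norm_sub_virtual_le (g := fun j => gradient f (x j)) hβ
          (fun i => (hγ i).le) hβmax hγμ hF hB hw hV0 hV hxt0 hxt).trans
          (mul_le_mul hcoef hgrad (sum_nonneg fun j _ => mul_nonneg (hw0 j) (sq_nonneg _))
            (by positivity))
    _ = F / 6 * SD := by field_simp; ring
    _ ≤ F / 4 * SD := by gcongr; norm_num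

/-- Lemma 2: under the AggHB parameter conditions, the weighted accumulated
deviation between the true iterates and the virtual iterates is bounded by
the weighted function suboptimality:
`3LF ∑_{k=0}^K w_k ‖x_k - x̃_k‖² ≤ (F/4) ∑_{k=0}^K w_k (f(x_k) - f(x_*))`. -/
theorem AggHB_weighted_sum_of_momentums {n : ℕ}
    (f : EuclideanSpace ℝ (Fin n) → ℝ) (hf : Differentiable ℝ f)
    (L μ : ℝ) (hL : 0 < L) (hμ : 0 ≤ μ)
    (hsmooth : ∀ x y, ‖gradient f x - gradient f y‖ ≤ L * ‖x - y‖)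
    (hstrconv : ∀ x y, f x + ⟪gradient f x, y - x⟫ + μ / 2 * ‖y - x‖ ^ 2 ≤ f y)
    (xstar : EuclideanSpace ℝ (Fin n)) (hmin : ∀ y, f xstar ≤ f y)
    (m : ℕ) (β γ : Fin (m + 1) → ℝ)
    (hβ : ∀ i, β i ∈ Set.Ico (0 : ℝ) 1) (hγ : ∀ i, 0 < γ i)
    (βmax : ℝ) (hβmax : βmax = Finset.univ.sup' Finset.univ_nonempty β)
    (hγμ : ∀ i, 2 * μ * γ i ≤ (1 - βmax) * (1 - β i))
    (F : ℝ) (hF : F = (1 / (m + 1 : ℝ)) * ∑ i, γ i / (1 - β i))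
    (hF4L : F ≤ 1 / (4 * L))
    (K : ℕ)
    (B : ℝ) (hB : B = (1 / (m + 1 : ℝ)) *
      ∑ i, β i * γ i * (1 - (β i) ^ (K + 1)) / (1 - β i) ^ 2)
    (hBF : B * F ≤ (1 - βmax) / (48 * L ^ 2))
    (x : ℕ → EuclideanSpace ℝ (Fin n)) (V : Fin (m + 1) → ℕ → EuclideanSpace ℝ (Fin n))
    (hV0 : ∀ i, V i 0 = gradient f (x 0))
    (hV : ∀ i k, V i (k + 1) = β i • V i k + gradient f (x (k + 1)))
    (hx : ∀ k, x (k + 1) = x k - (1 / (m + 1 : ℝ)) • ∑ i, γ i • V i k)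
    (xt : ℕ → EuclideanSpace ℝ (Fin n))
    (hxt0 : xt 0 = x 0)
    (hxt : ∀ k, xt (k + 1) = x (k + 1) - (1 / (m + 1 : ℝ)) •
      ∑ i, (β i * γ i / (1 - β i)) • V i k)
    (w : ℕ → ℝ) (hw : ∀ k, w k = ((1 - μ * F / 2)⁻¹) ^ (k + 1)) :
    3 * L * F * ∑ k ∈ Finset.range (K + 1), w k * ‖x k - xt k‖ ^ 2 ≤
      F / 4 * ∑ k ∈ Finset.range (K + 1), w k * (f (x k) - f xstar) :=
  AggHB_weighted_sum_of_momentums_general f hf L μ hL hsmooth xstar hmin m β γ hβ hγ βmax hβmax hγμ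
    F hF K B hB hBF x V hV0 hV xt hxt0 hxt w hw
end

section
/- Let f : ℝⁿ → ℝ be L-smooth. For AggHB iterates with A = (1/m)∑ᵢ βᵢγᵢ/(1-βᵢ), the one-step descent on the virtual iterates satisfies f(x̃_{k+1}) ≤ f(x̃_k) - (A/2)(1 - LA)‖∇f(x_k)‖² + (AL²/(2m²))‖∑ᵢ (βᵢγᵢ/(1-βᵢ))V_{k-1}^{(i)}‖². -/
/-!
Along the segment from `x` to `y`, the gap between `f` and its linearisation at `x` grows at rate
at most `L t ‖y - x‖²`, which gives the descent lemma
`f y ≤ f x + ⟪∇f x, y - x⟫ + L/2 ‖y - x‖²`. Applied to the virtual step `y - A ∇f(x)`, the cross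
term `-A⟪∇f(y), ∇f(x)⟫` is expanded by polarisation; the term `‖∇f(y) - ∇f(x)‖²` it produces is
at most `L² ‖y - x‖²`, and `y - x` is, up to the factor `1/(m+1)`, the weighted sum of the
previous momenta.
-/

open RealInnerProductSpace

section Descent

variable {E : Type*} [NormedAddCommGroup E] [InnerProductSpace ℝ E] [CompleteSpace E]
  {f : E → ℝ} {L : ℝ}

theorem hasDerivAt_comp_add_smul (hf : Differentiable ℝ f) (x d : E) (t : ℝ) :
    HasDerivAt (fun s : ℝ => f (x + s • d)) ⟪gradient f (x + t • d), d⟫ t := by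
  have hline : HasDerivAt (fun s : ℝ => x + s • d) d t := by
    simpa using ((hasDerivAt_id t).smul_const d).const_add x
  rw [inner_gradient_left]
  exact (hf _).hasFDerivAt.comp_hasDerivAt t hline

theorem descent_lemma (hf : Differentiable ℝ f)
    (hsmooth : ∀ x y, ‖gradient f x - gradient f y‖ ≤ L * ‖x - y‖) (x y : E) :
    f y ≤ f x + ⟪gradient f x, y - x⟫ + L / 2 * ‖y - x‖ ^ 2 := by
  set d := y - x
  set φ : ℝ → ℝ := fun t => f (x + t • d) - t * ⟪gradient f x, d⟫ - L / 2 * t ^ 2 * ‖d‖ ^ 2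
  have hφ : ∀ t, HasDerivAt φ
      (⟪gradient f (x + t • d), d⟫ - ⟪gradient f x, d⟫ - L * t * ‖d‖ ^ 2) t := by
    intro t
    refine (((hasDerivAt_comp_add_smul hf x d t).sub ((hasDerivAt_id t).mul_const _)).sub
      (((hasDerivAt_pow 2 t).const_mul (L / 2)).mul_const (‖d‖ ^ 2))).congr_deriv ?_
    push_cast
    ring
  have hφ' : ∀ t ∈ interior (Set.Ici (0 : ℝ)),
      ⟪gradient f (x + t • d), d⟫ - ⟪gradient f x, d⟫ - L * t * ‖d‖ ^ 2 ≤ 0 := by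
    intro t ht
    rw [interior_Ici, Set.mem_Ioi] at ht
    rw [sub_nonpos]
    have hlip : ‖gradient f (x + t • d) - gradient f x‖ ≤ L * (t * ‖d‖) := by
      simpa [norm_smul, abs_of_pos ht] using hsmooth (x + t • d) x
    calc ⟪gradient f (x + t • d), d⟫ - ⟪gradient f x, d⟫
        = ⟪gradient f (x + t • d) - gradient f x, d⟫ := (inner_sub_left _ _ _).symm
      _ ≤ ‖gradient f (x + t • d) - gradient f x‖ * ‖d‖ := real_inner_le_norm _ _
      _ ≤ L * (t * ‖d‖) * ‖d‖ := mul_le_mul_of_nonneg_right hlip (norm_nonneg d)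
      _ = L * t * ‖d‖ ^ 2 := by ring
  have hanti : AntitoneOn φ (Set.Ici 0) :=
    antitoneOn_of_hasDerivWithinAt_nonpos (convex_Ici 0)
      (fun t _ => (hφ t).continuousAt.continuousWithinAt)
      (fun t _ => (hφ t).hasDerivWithinAt) hφ'
  have h10 : φ 1 ≤ φ 0 := hanti Set.self_mem_Ici (Set.mem_Ici.2 zero_le_one) zero_le_one
  simp only [φ, d, one_smul, zero_smul, add_zero, add_sub_cancel] at h10
  linarith

theorem descent_of_shifted_gradient_step (hf : Differentiable ℝ f)
    (hsmooth : ∀ x y, ‖gradient f x - gradient f y‖ ≤ L * ‖x - y‖)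
    {A : ℝ} (hA : 0 ≤ A) (y x : E) :
    f (y - A • gradient f x) ≤ f y - A / 2 * (1 - L * A) * ‖gradient f x‖ ^ 2 +
      A * L ^ 2 / 2 * ‖y - x‖ ^ 2 := by
  set g := gradient f x
  set gy := gradient f y
  have hdescent := descent_lemma hf hsmooth y (y - A • g)
  have hstep : y - A • g - y = -(A • g) := by abel
  rw [hstep, inner_neg_right, real_inner_smul_right, norm_neg, norm_smul, Real.norm_eq_abs,
    mul_pow, sq_abs] at hdescent
  have hpolar : A * ⟪gy, g⟫ = A / 2 * (‖gy‖ ^ 2 + ‖g‖ ^ 2 - ‖gy - g‖ ^ 2) := by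
    rw [norm_sub_sq_real]; ring
  have hlip : ‖gy - g‖ ^ 2 ≤ L ^ 2 * ‖y - x‖ ^ 2 := by
    rw [← mul_pow]; exact pow_le_pow_left₀ (norm_nonneg _) (hsmooth y x) 2
  linarith [mul_le_mul_of_nonneg_left hlip hA, mul_nonneg hA (sq_nonneg ‖gy‖)]

end Descent

theorem AggHB_virtual_descent_general {n : ℕ}
    (f : EuclideanSpace ℝ (Fin n) → ℝ) (hf : Differentiable ℝ f)
    (L : ℝ)
    (hsmooth : ∀ x y, ‖gradient f x - gradient f y‖ ≤ L * ‖x - y‖)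
    (m : ℕ) (β γ : Fin (m + 1) → ℝ)
    (hβ : ∀ i, β i ∈ Set.Ico (0 : ℝ) 1) (hγ : ∀ i, 0 < γ i)
    (A : ℝ) (hA : A = (1 / (m + 1 : ℝ)) * ∑ i, β i * γ i / (1 - β i))
    (xtk xtk1 xk : EuclideanSpace ℝ (Fin n)) (Vprev : Fin (m + 1) → EuclideanSpace ℝ (Fin n))
    (hrec : xtk1 = xtk - A • gradient f xk)
    (hdev : xtk - xk = -((1 / (m + 1 : ℝ)) • ∑ i, (β i * γ i / (1 - β i)) • Vprev i)) :
    f xtk1 ≤ f xtk - A / 2 * (1 - L * A) * ‖gradient f xk‖ ^ 2 +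
      A * L ^ 2 / (2 * (m + 1 : ℝ) ^ 2) *
        ‖∑ i, (β i * γ i / (1 - β i)) • Vprev i‖ ^ 2 := by
  have hA0 : 0 ≤ A := by
    rw [hA]
    refine mul_nonneg (by positivity) (Finset.sum_nonneg fun i _ => ?_)
    have hβ1 : 0 < 1 - β i := sub_pos.2 (hβ i).2
    exact div_nonneg (mul_nonneg (hβ i).1 (hγ i).le) hβ1.le
  have hdist : ‖xtk - xk‖ = ‖∑ i, (β i * γ i / (1 - β i)) • Vprev i‖ / (m + 1 : ℝ) := by
    rw [hdev, norm_neg, norm_smul, Real.norm_of_nonneg (by positivity)]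
    ring
  have hstep := descent_of_shifted_gradient_step hf hsmooth hA0 xtk xk
  rw [hdist] at hstep
  rw [hrec]
  convert hstep using 2
  field_simp

/-- One-step descent on the AggHB virtual iterates in the non-convex analysis:
with `A = (1/m)∑ᵢ βᵢγᵢ/(1-βᵢ)` and `x̃_{k+1} = x̃_k - A∇f(x_k)`,
`f(x̃_{k+1}) ≤ f(x̃_k) - (A/2)(1 - LA)‖∇f(x_k)‖²
  + (AL²/(2m²))‖∑ᵢ (βᵢγᵢ/(1-βᵢ))V_{k-1}^{(i)}‖²`. -/
theorem AggHB_virtual_descent {n : ℕ}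
    (f : EuclideanSpace ℝ (Fin n) → ℝ) (hf : Differentiable ℝ f)
    (L : ℝ) (hL : 0 ≤ L)
    (hsmooth : ∀ x y, ‖gradient f x - gradient f y‖ ≤ L * ‖x - y‖)
    (m : ℕ) (β γ : Fin (m + 1) → ℝ)
    (hβ : ∀ i, β i ∈ Set.Ico (0 : ℝ) 1) (hγ : ∀ i, 0 < γ i)
    (A : ℝ) (hA : A = (1 / (m + 1 : ℝ)) * ∑ i, β i * γ i / (1 - β i))
    (xtk xtk1 xk : EuclideanSpace ℝ (Fin n)) (Vprev : Fin (m + 1) → EuclideanSpace ℝ (Fin n))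
    (hrec : xtk1 = xtk - A • gradient f xk)
    (hdev : xtk - xk = -((1 / (m + 1 : ℝ)) • ∑ i, (β i * γ i / (1 - β i)) • Vprev i)) :
    f xtk1 ≤ f xtk - A / 2 * (1 - L * A) * ‖gradient f xk‖ ^ 2 +
      A * L ^ 2 / (2 * (m + 1 : ℝ) ^ 2) *
        ‖∑ i, (β i * γ i / (1 - β i)) • Vprev i‖ ^ 2 :=
  AggHB_virtual_descent_general f hf L hsmooth m β γ hβ hγ A hA xtk xtk1 xk Vprev hrec hdev
end
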